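/- Let X be a Fano manifold with c_X := max{codim N₁(D,X) : D prime divisor}. Let D ⊂ X be a prime divisor with codim N₁(D,X) = c_X, and let E₁,…,E_s ⊂ X (s ≥ 2) be pairwise disjoint prime divisors such that for every i: D∩E_i ≠ ∅, D ≠ E_i, and codim N₁(D∩E_i,X) ≤ c_X + 1. Then codim N₁(D∩E_i,X) = c_X + 1 for every i, and N₁(D∩E_i,X) = N₁(D,X) ∩ E_j^⊥ for every i ≠ j. If moreover s ≥ 3, then there is a single linear subspace L ⊂ N₁(X) of codimension c_X + 1 with L = N₁(D∩E_i,X) = N₁(D,X) ∩ E_i^⊥ for all i = 1,…,s. -/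

import Mathlib

noncomputable section

/-- An abstract projective manifold `X` together with its space `N₁` of real 1-cycles
modulo numerical equivalence, curves and prime divisors (as subsets of `X`),
intersection numbers of divisors with curve classes, and the basic geometric facts
relating them. -/
structure SetVariety : Type 1 where
  /-- the points of the projective manifold `X` -/
  X : Type
  [top : TopologicalSpace X]
  /-- `N₁(X)`: real 1-cycles modulo numerical equivalence -/
  N₁ : Type
  [grp : AddCommGroup N₁]
  [mod : Module ℝ N₁]
  [fd : FiniteDimensional ℝ N₁]
  /-- `X` is a Fano manifold -/
  IsFano : Prop
  /-- the dimension of `X` -/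
  dim : ℕ
  /-- `C` is an irreducible curve in `X` -/
  IsCurve : Set X → Prop
  /-- numerical class of a curve in `N₁(X)` -/
  cls : Set X → N₁
  /-- `D` is a prime divisor in `X` -/
  IsPrimeDivisor : Set X → Prop
  /-- `D` is a smooth prime divisor -/
  IsSmoothDiv : Set X → Prop
  /-- intersection with the divisor `D`, as a linear functional on `N₁(X)`
  (the class of `D` in `N¹(X)`) -/
  deg : Set X → Module.Dual ℝ N₁
  /-- `E` is a smooth `ℙ¹`-bundle over some base, and `f` is one of its fibers -/
  IsP1BundleWithFiber : Set X → Set X → Prop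
  /-- a fiber of a `ℙ¹`-bundle divisor is a curve contained in it -/
  curve_of_fiber : ∀ {E f : Set X}, IsP1BundleWithFiber E f → IsCurve f ∧ f ⊆ E
  /-- through every point of a `ℙ¹`-bundle divisor there is a fiber, numerically
  equivalent to the given one -/
  fiber_through : ∀ {E f : Set X}, IsP1BundleWithFiber E f → ∀ x ∈ E,
      ∃ f' : Set X, IsCurve f' ∧ f' ⊆ E ∧ x ∈ f' ∧ cls f' = cls f
  /-- a divisor disjoint from a curve meets it in degree zero -/
  deg_disjoint : ∀ {D C : Set X}, IsPrimeDivisor D → IsCurve C → C ∩ D = ∅ →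
      deg D (cls C) = 0
  /-- a curve not contained in a prime divisor meets it nonnegatively -/
  deg_nonneg : ∀ {D C : Set X}, IsPrimeDivisor D → IsCurve C → ¬ C ⊆ D →
      0 ≤ deg D (cls C)
  /-- a curve meeting, but not contained in, a prime divisor meets it positively -/
  deg_pos_of_meets : ∀ {D C : Set X}, IsPrimeDivisor D → IsCurve C → ¬ C ⊆ D →
      (C ∩ D).Nonempty → 0 < deg D (cls C)
  /-- distinct prime divisors: neither contains the other -/
  not_subset_of_ne : ∀ {D D' : Set X}, IsPrimeDivisor D → IsPrimeDivisor D' →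
      D ≠ D' → ¬ D ⊆ D'
  /-- if two distinct prime divisors meet, there is a curve in the first meeting the
  second positively -/
  exists_curve_pos : ∀ {D E : Set X}, IsPrimeDivisor D → IsPrimeDivisor E →
      D ≠ E → (D ∩ E).Nonempty → ∃ C : Set X, IsCurve C ∧ C ⊆ D ∧ 0 < deg E (cls C)

attribute [instance] SetVariety.top SetVariety.grp SetVariety.mod SetVariety.fd

namespace SetVariety

variable (V : SetVariety)

/-- `N₁(Z,X)`: the subspace of `N₁(X)` spanned by classes of curves contained in `Z`. -/
def n1 (Z : Set V.X) : Submodule ℝ V.N₁ :=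
  Submodule.span ℝ {v : V.N₁ | ∃ C : Set V.X, V.IsCurve C ∧ C ⊆ Z ∧ V.cls C = v}

/-- `codim N₁(Z,X)` in `N₁(X)`. -/
def codim (Z : Set V.X) : ℕ :=
  Module.finrank ℝ V.N₁ - Module.finrank ℝ ↥(V.n1 Z)

end SetVariety

/-!
A curve in `D ∩ Eᵢ` misses `Eⱼ` for `j ≠ i`, hence has degree `0` on it, so
`N₁(D ∩ Eᵢ) ⊆ N₁(D) ∩ Eⱼ^⊥`. The right-hand side is a hyperplane of `N₁(D)`, since `D` contains
a curve meeting `Eⱼ` positively; hence it has codimension `c_X + 1`, and the assumed bound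
`c_X + 1` on the codimension of the left-hand side forces equality. For `s ≥ 3`, any two indices
`i, i'` have a common third index `k`, so `N₁(D ∩ Eᵢ) = N₁(D) ∩ E_k^⊥ = N₁(D ∩ E_{i'})`.
-/

open Module

theorem Submodule.finrank_inf_ker_add_one {K N : Type*} [Field K] [AddCommGroup N] [Module K N]
    [FiniteDimensional K N] (p : Submodule K N) (φ : Dual K N) {v : N} (hv : v ∈ p)
    (hφv : φ v ≠ 0) : finrank K ↥(p ⊓ LinearMap.ker φ) + 1 = finrank K p := by
  have hψ : φ.domRestrict p ≠ 0 := fun h => hφv (by simpa using LinearMap.congr_fun h ⟨v, hv⟩)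
  rw [← Dual.finrank_ker_add_one_of_ne_zero hψ, LinearMap.ker_domRestrict,
    ← Submodule.map_comap_subtype, Submodule.finrank_map_subtype_eq]

theorem Fin.eq_and_eq_of_forall_ne {α : Type*} {n : ℕ} (hn : 2 < n) {A B : Fin n → α}
    (h : ∀ i j, i ≠ j → A i = B j) (i j : Fin n) : A i = A j ∧ B i = A j := by
  have hA : ∀ i j, A i = A j := fun i j =>
    let ⟨k, hki, hkj⟩ := Fin.exists_ne_and_ne_of_two_lt i j hn
    (h i k hki.symm).trans (h j k hkj.symm).symm
  obtain ⟨k, hki, -⟩ := Fin.exists_ne_and_ne_of_two_lt i i hn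
  exact ⟨hA i j, (h k i hki).symm.trans (hA k j)⟩

namespace SetVariety

variable (V : SetVariety)

theorem cls_mem_n1 {Z C : Set V.X} (hC : V.IsCurve C) (hCZ : C ⊆ Z) : V.cls C ∈ V.n1 Z :=
  Submodule.subset_span ⟨C, hC, hCZ, rfl⟩

theorem n1_mono {Z W : Set V.X} (h : Z ⊆ W) : V.n1 Z ≤ V.n1 W :=
  Submodule.span_mono fun _ ⟨_, hC, hCZ, hv⟩ => ⟨_, hC, hCZ.trans h, hv⟩

theorem codim_add_finrank_n1 (Z : Set V.X) :
    V.codim Z + finrank ℝ ↥(V.n1 Z) = finrank ℝ V.N₁ :=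
  Nat.sub_add_cancel (Submodule.finrank_le _)

theorem n1_le_ker_deg_of_disjoint {Z E : Set V.X} (hE : V.IsPrimeDivisor E) (hZE : Z ∩ E = ∅) :
    V.n1 Z ≤ LinearMap.ker (V.deg E) :=
  Submodule.span_le.mpr fun _ ⟨_, hC, hCZ, hv⟩ =>
    hv ▸ V.deg_disjoint hE hC (Set.subset_empty_iff.mp (hZE ▸ Set.inter_subset_inter_left E hCZ))

theorem exists_mem_n1_deg_ne_zero {D E : Set V.X} (hD : V.IsPrimeDivisor D)
    (hE : V.IsPrimeDivisor E) (hDE : D ≠ E) (hmeet : (D ∩ E).Nonempty) :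
    ∃ v ∈ V.n1 D, V.deg E v ≠ 0 :=
  let ⟨C, hC, hCD, hpos⟩ := V.exists_curve_pos hD hE hDE hmeet
  ⟨V.cls C, V.cls_mem_n1 hC hCD, hpos.ne'⟩

theorem finrank_n1_inf_ker_deg_add_one {D E : Set V.X} (hD : V.IsPrimeDivisor D)
    (hE : V.IsPrimeDivisor E) (hDE : D ≠ E) (hmeet : (D ∩ E).Nonempty) :
    finrank ℝ ↥(V.n1 D ⊓ LinearMap.ker (V.deg E)) + 1 = finrank ℝ ↥(V.n1 D) :=
  let ⟨_, hv, hdeg⟩ := V.exists_mem_n1_deg_ne_zero hD hE hDE hmeet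
  (V.n1 D).finrank_inf_ker_add_one _ hv hdeg

section DisjointDivisors

variable {V} {D E E' : Set V.X} (hD : V.IsPrimeDivisor D) (hE' : V.IsPrimeDivisor E')
  (hEE' : E ∩ E' = ∅) (hDE' : D ≠ E') (hmeet : (D ∩ E').Nonempty)
  (hcodim : V.codim (D ∩ E) ≤ V.codim D + 1)
include hD hE' hEE' hDE' hmeet hcodim

theorem n1_inter_eq_inf_ker_deg :
    V.n1 (D ∩ E) = V.n1 D ⊓ LinearMap.ker (V.deg E') := by
  have hle : V.n1 (D ∩ E) ≤ V.n1 D ⊓ LinearMap.ker (V.deg E') :=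
    le_inf (V.n1_mono Set.inter_subset_left) (V.n1_le_ker_deg_of_disjoint hE'
      (Set.subset_empty_iff.mp (hEE' ▸ Set.inter_subset_inter_left E' Set.inter_subset_right)))
  refine Submodule.eq_of_le_of_finrank_le hle ?_
  have := V.finrank_n1_inf_ker_deg_add_one hD hE' hDE' hmeet
  have := V.codim_add_finrank_n1 D
  have := V.codim_add_finrank_n1 (D ∩ E)
  omega

theorem codim_inter_eq_codim_add_one : V.codim (D ∩ E) = V.codim D + 1 := by
  have h := V.finrank_n1_inf_ker_deg_add_one hD hE' hDE' hmeet
  rw [← n1_inter_eq_inf_ker_deg hD hE' hEE' hDE' hmeet hcodim] at h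
  have := V.codim_add_finrank_n1 D
  have := V.codim_add_finrank_n1 (D ∩ E)
  omega

end DisjointDivisors

end SetVariety

theorem stmt_5_general (V : SetVariety) (cX : ℕ)
    (D : Set V.X) (hD : V.IsPrimeDivisor D) (hDc : V.codim D = cX)
    (s : ℕ) (hs : 2 ≤ s) (E : Fin s → Set V.X)
    (hE : ∀ i, V.IsPrimeDivisor (E i))
    (hdisj : ∀ i j, i ≠ j → E i ∩ E j = ∅)
    (hmeet : ∀ i, (D ∩ E i).Nonempty)
    (hne : ∀ i, D ≠ E i)
    (hcodim : ∀ i, V.codim (D ∩ E i) ≤ cX + 1) :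
    (∀ i, V.codim (D ∩ E i) = cX + 1) ∧
    (∀ i j, i ≠ j → V.n1 (D ∩ E i) = V.n1 D ⊓ LinearMap.ker (V.deg (E j))) ∧
    (3 ≤ s → ∃ L : Submodule ℝ V.N₁,
      Module.finrank ℝ V.N₁ - Module.finrank ℝ ↥L = cX + 1 ∧
      ∀ i, L = V.n1 (D ∩ E i) ∧ L = V.n1 D ⊓ LinearMap.ker (V.deg (E i))) := by
  subst hDc
  have hcodim_eq : ∀ i, V.codim (D ∩ E i) = V.codim D + 1 := by
    have : Nontrivial (Fin s) := Fin.nontrivial_iff_two_le.mpr hs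
    intro i
    obtain ⟨j, hji⟩ := exists_ne i
    exact V.codim_inter_eq_codim_add_one hD (hE j) (hdisj i j hji.symm) (hne j) (hmeet j)
      (hcodim i)
  have hpair : ∀ i j, i ≠ j → V.n1 (D ∩ E i) = V.n1 D ⊓ LinearMap.ker (V.deg (E j)) :=
    fun i j hij => V.n1_inter_eq_inf_ker_deg hD (hE j) (hdisj i j hij) (hne j) (hmeet j) (hcodim i)
  refine ⟨hcodim_eq, hpair, fun hs3 => ?_⟩
  let i₀ : Fin s := ⟨0, by omega⟩
  refine ⟨V.n1 (D ∩ E i₀), hcodim_eq i₀, fun i => ?_⟩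
  obtain ⟨hA, hB⟩ := Fin.eq_and_eq_of_forall_ne hs3 hpair i i₀
  exact ⟨hA.symm, hB.symm⟩

/-- Lemma 3.7, `meno`.
`X` is Fano with invariant `c_X` (here: `cX` together with the hypothesis `hmax` that
it bounds `codim N₁(D',X)` for all prime divisors `D'`). `D` is a prime divisor with
`codim N₁(D,X) = c_X`, and `E₁,…,E_s` (`s ≥ 2`) are pairwise disjoint prime divisors
with `D ∩ E_i ≠ ∅`, `D ≠ E_i`, and `codim N₁(D∩E_i,X) ≤ c_X + 1`.
Then `codim N₁(D∩E_i,X) = c_X + 1` for all `i`, and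
`N₁(D∩E_i,X) = N₁(D,X) ∩ E_j^⊥` for `i ≠ j`; if `s ≥ 3` there is a single subspace
`L` of codimension `c_X + 1` equal to all of them. -/
theorem stmt_5 (V : SetVariety) (hFano : V.IsFano) (cX : ℕ)
    (hmax : ∀ D' : Set V.X, V.IsPrimeDivisor D' → V.codim D' ≤ cX)
    (D : Set V.X) (hD : V.IsPrimeDivisor D) (hDc : V.codim D = cX)
    (s : ℕ) (hs : 2 ≤ s) (E : Fin s → Set V.X)
    (hE : ∀ i, V.IsPrimeDivisor (E i))
    (hdisj : ∀ i j, i ≠ j → E i ∩ E j = ∅)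
    (hmeet : ∀ i, (D ∩ E i).Nonempty)
    (hne : ∀ i, D ≠ E i)
    (hcodim : ∀ i, V.codim (D ∩ E i) ≤ cX + 1) :
    (∀ i, V.codim (D ∩ E i) = cX + 1) ∧
    (∀ i j, i ≠ j → V.n1 (D ∩ E i) = V.n1 D ⊓ LinearMap.ker (V.deg (E j))) ∧
    (3 ≤ s → ∃ L : Submodule ℝ V.N₁,
      Module.finrank ℝ V.N₁ - Module.finrank ℝ ↥L = cX + 1 ∧
      ∀ i, L = V.n1 (D ∩ E i) ∧ L = V.n1 D ⊓ LinearMap.ker (V.deg (E i))) :=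
  stmt_5_general V cX D hD hDc s hs E hE hdisj hmeet hne hcodim
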